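/- arXiv:1802.08149 — 2 statements merged into one kernel-verified Lean document; each statement's English description precedes it below -/
import Mathlib

section
/- Let $m \in \mathbb{R}$ and let $b : \mathbb{R}^n \times \mathbb{R}^n \to \mathbb{C}$ be smooth, $2\pi$-periodic in the first variable $x$, and satisfy the Hörmander symbol estimates: for all multi-indices $\alpha, \beta \in \mathbb{Z}_+^n$ there is $C_{\alpha\beta} > 0$ with $|\partial_x^\alpha \partial_\eta^\beta b(x,\eta)| \le C_{\alpha\beta} \langle\eta\rangle^{m - |\beta|}$ for all $(x,\eta)$. Then for all multi-indices $\alpha, \beta$ there exists $C'_{\alpha\beta} > 0$ such that $|\partial_x^\alpha \Delta_\eta^\beta b(x,\eta)| \le C'_{\alpha\beta} \langle\eta\rangle^{m-|\beta|}$ for all $x \in \mathbb{R}^n$ and $\eta \in \mathbb{R}^n$, where $\Delta_\eta^\beta$ is the iterated forward difference operator determined by $\Delta_{\eta_j} b(x,\eta) := b(x,\eta + e_j) - b(x,\eta)$. -/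
noncomputable section

/-- Composition of a list of operators. -/
def compAll {F : Type*} (l : List (F → F)) : F → F := l.foldr (· ∘ ·) id

/-- Iterated application `D₁^[α 1] ∘ ⋯ ∘ Dₙ^[α n]` of a family of operators,
according to a multi-index `α`. -/
def multiOp {n : ℕ} {F : Type*} (D : Fin n → F → F) (α : Fin n → ℕ) : F → F :=
  compAll ((List.finRange n).map fun j => (D j)^[α j])

/-- Partial derivative in the `j`-th `x`-direction of a symbol on `ℝⁿ × ℝⁿ`. -/
def pX {n : ℕ} (j : Fin n)
    (f : EuclideanSpace ℝ (Fin n) × EuclideanSpace ℝ (Fin n) → ℂ) :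
    EuclideanSpace ℝ (Fin n) × EuclideanSpace ℝ (Fin n) → ℂ :=
  fun z => fderiv ℝ f z (EuclideanSpace.single j 1, 0)

/-- Partial derivative in the `j`-th `η`-direction of a symbol on `ℝⁿ × ℝⁿ`. -/
def pEta {n : ℕ} (j : Fin n)
    (f : EuclideanSpace ℝ (Fin n) × EuclideanSpace ℝ (Fin n) → ℂ) :
    EuclideanSpace ℝ (Fin n) × EuclideanSpace ℝ (Fin n) → ℂ :=
  fun z => fderiv ℝ f z (0, EuclideanSpace.single j 1)

/-- Forward difference in the `j`-th `η`-direction of a symbol on `ℝⁿ × ℝⁿ`. -/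
def dEta {n : ℕ} (j : Fin n)
    (f : EuclideanSpace ℝ (Fin n) × EuclideanSpace ℝ (Fin n) → ℂ) :
    EuclideanSpace ℝ (Fin n) × EuclideanSpace ℝ (Fin n) → ℂ :=
  fun z => f (z.1, z.2 + EuclideanSpace.single j 1) - f z

/-! ### Auxiliary material -/

section ListOps

variable {F : Type*}

theorem compAll_nil : compAll ([] : List (F → F)) = id := rfl

theorem compAll_cons (g : F → F) (l : List (F → F)) :
    compAll (g :: l) = g ∘ compAll l := rfl

theorem compAll_append (l₁ l₂ : List (F → F)) :
    compAll (l₁ ++ l₂) = compAll l₁ ∘ compAll l₂ := by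
  induction l₁ with
  | nil => rfl
  | cons g l ih => simp [compAll_cons, ih, Function.comp_assoc]

theorem iterate_eq_compAll {k : ℕ} (D : Fin k → F → F) (j : Fin k) (r : ℕ) :
    (D j)^[r] = compAll ((List.replicate r j).map D) := by
  induction r with
  | zero => rfl
  | succ r ih =>
    rw [Function.iterate_succ', List.replicate_succ, List.map_cons, compAll_cons, ih]

/-- Index list of a multi-index. -/
def idxList {k : ℕ} (β : Fin k → ℕ) : List (Fin k) :=
  (List.finRange k).flatMap fun j => List.replicate (β j) j

theorem multiOp_eq_compAll {k : ℕ} (D : Fin k → F → F) (β : Fin k → ℕ) :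
    multiOp D β = compAll ((idxList β).map D) := by
  unfold multiOp idxList
  induction List.finRange k with
  | nil => rfl
  | cons j l ih =>
    rw [List.map_cons, compAll_cons, ih, List.flatMap_cons, List.map_append,
      compAll_append, iterate_eq_compAll]

theorem idxList_length {k : ℕ} (β : Fin k → ℕ) : (idxList β).length = ∑ j, β j := by
  rw [idxList, List.length_flatMap, Fin.sum_univ_def]
  congr 1
  exact List.map_congr_left fun a _ => List.length_replicate ..

theorem multiOp_zero {k : ℕ} (D : Fin k → F → F) (f : F) :
    multiOp D (fun _ => 0) f = f := by
  unfold multiOp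
  induction List.finRange k with
  | nil => rfl
  | cons j l ih => simpa [compAll_cons] using ih

/-- Preservation of a predicate through `compAll`. -/
theorem pr_compAll (Pr : F → Prop) (l : List (F → F))
    (hl : ∀ g ∈ l, ∀ f, Pr f → Pr (g f)) : ∀ f, Pr f → Pr (compAll l f) := by
  induction l with
  | nil => exact fun f hf => hf
  | cons g l ih =>
    intro f hf
    exact hl g (by simp) _ (ih (fun g' hg' => hl g' (by simp [hg'])) f hf)

theorem pr_iterate (Pr : F → Prop) (B : F → F) (hB : ∀ f, Pr f → Pr (B f)) :
    ∀ (r : ℕ) (f), Pr f → Pr (B^[r] f) := by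
  intro r
  induction r with
  | zero => exact fun f hf => hf
  | succ r ih =>
    intro f hf
    rw [Function.iterate_succ_apply]
    exact ih _ (hB f hf)

theorem pr_multiOp (Pr : F → Prop) {k : ℕ} (D : Fin k → F → F) (δ : Fin k → ℕ)
    (hD : ∀ j f, Pr f → Pr (D j f)) : ∀ f, Pr f → Pr (multiOp D δ f) := by
  intro f hf
  refine pr_compAll Pr _ ?_ f hf
  intro g hg f' hf'
  simp only [List.mem_map] at hg
  obtain ⟨j, -, rfl⟩ := hg
  exact pr_iterate Pr (D j) (hD j) _ _ hf'

theorem comm_iterate (Pr : F → Prop) (A B : F → F)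
    (hB : ∀ f, Pr f → Pr (B f)) (hAB : ∀ f, Pr f → A (B f) = B (A f)) :
    ∀ (r : ℕ) (f), Pr f → A (B^[r] f) = B^[r] (A f) := by
  intro r
  induction r with
  | zero => simp
  | succ r ih =>
    intro f hf
    rw [Function.iterate_succ_apply, Function.iterate_succ_apply,
      ih _ (hB f hf), hAB f hf]

theorem comm_compAll (Pr : F → Prop) (A : F → F) (l : List (F → F))
    (hl : ∀ g ∈ l, ∀ f, Pr f → Pr (g f))
    (hcomm : ∀ g ∈ l, ∀ f, Pr f → A (g f) = g (A f)) :
    ∀ f, Pr f → A (compAll l f) = compAll l (A f) := by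
  induction l with
  | nil => intro f _; rfl
  | cons g l ih =>
    intro f hf
    have h1 : Pr (compAll l f) :=
      pr_compAll Pr l (fun g' hg' => hl g' (by simp [hg'])) f hf
    calc A (compAll (g :: l) f) = A (g (compAll l f)) := rfl
      _ = g (A (compAll l f)) := hcomm g (by simp) _ h1
      _ = g (compAll l (A f)) := by
          rw [ih (fun g' hg' => hl g' (by simp [hg']))
            (fun g' hg' => hcomm g' (by simp [hg'])) f hf]
      _ = compAll (g :: l) (A f) := rfl

theorem comm_multiOp (Pr : F → Prop) (A : F → F) {k : ℕ} (D : Fin k → F → F)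
    (δ : Fin k → ℕ)
    (hD : ∀ j f, Pr f → Pr (D j f))
    (hAD : ∀ j f, Pr f → A (D j f) = D j (A f)) :
    ∀ f, Pr f → A (multiOp D δ f) = multiOp D δ (A f) := by
  intro f hf
  refine comm_compAll Pr A _ ?_ ?_ f hf
  · intro g hg f' hf'
    simp only [List.mem_map] at hg
    obtain ⟨j, -, rfl⟩ := hg
    exact pr_iterate Pr (D j) (hD j) _ _ hf'
  · intro g hg f' hf'
    simp only [List.mem_map] at hg
    obtain ⟨j, -, rfl⟩ := hg
    exact comm_iterate Pr A (D j) (hD j) (hAD j) _ _ hf'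

/-- Pulling one extra application of `D j` out of a `multiOp`. -/
theorem multiOp_succ (Pr : F → Prop) {k : ℕ} (D : Fin k → F → F) (γ : Fin k → ℕ)
    (j : Fin k)
    (hD : ∀ i f, Pr f → Pr (D i f))
    (hDD : ∀ i i' f, Pr f → D i (D i' f) = D i' (D i f)) :
    ∀ f, Pr f →
      multiOp D (fun i => γ i + if i = j then 1 else 0) f = D j (multiOp D γ f) := by
  have main : ∀ l : List (Fin k), l.Nodup → j ∈ l → ∀ f, Pr f →
      compAll (l.map fun i => (D i)^[γ i + if i = j then 1 else 0]) f
        = D j (compAll (l.map fun i => (D i)^[γ i]) f) := by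
    intro l
    induction l with
    | nil => intro _ hj; exact absurd hj List.not_mem_nil
    | cons i l ih =>
      intro hnd hj f hf
      have hi : i ∉ l := (List.nodup_cons.mp hnd).1
      have hndl : l.Nodup := (List.nodup_cons.mp hnd).2
      have hPl : Pr (compAll (l.map fun i' => (D i')^[γ i']) f) := by
        refine pr_compAll Pr _ ?_ f hf
        intro g hg f' hf'
        simp only [List.mem_map] at hg
        obtain ⟨i', -, rfl⟩ := hg
        exact pr_iterate Pr (D i') (hD i') _ _ hf'
      by_cases hij : i = j
      · subst hij
        have hmap : (l.map fun i' => (D i')^[γ i' + if i' = i then 1 else 0])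
            = l.map fun i' => (D i')^[γ i'] := by
          refine List.map_congr_left ?_
          intro a ha
          have : a ≠ i := fun h => hi (h ▸ ha)
          rw [if_neg this, Nat.add_zero]
        rw [List.map_cons, compAll_cons, List.map_cons, compAll_cons]
        simp only [Function.comp_apply]
        rw [hmap]
        simp only [if_true]
        rw [Function.iterate_succ_apply']
      · have hjl : j ∈ l := by
          rcases List.mem_cons.mp hj with h | h
          · exact absurd h.symm hij
          · exact h
        rw [List.map_cons, compAll_cons, List.map_cons, compAll_cons]
        simp only [Function.comp_apply]
        rw [if_neg hij, Nat.add_zero, ih hndl hjl f hf]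
        exact (comm_iterate Pr (D j) (D i) (hD i) (fun f' hf' => hDD j i f' hf') _ _ hPl).symm
  intro f hf
  exact main (List.finRange k) (List.nodup_finRange k) (List.mem_finRange j) f hf

end ListOps

section SymbolAux

variable {n : ℕ}

local notation "PS" => (EuclideanSpace ℝ (Fin n) × EuclideanSpace ℝ (Fin n))

/-- Directional derivative operator. -/
def Dop (v : EuclideanSpace ℝ (Fin n) × EuclideanSpace ℝ (Fin n))
    (f : EuclideanSpace ℝ (Fin n) × EuclideanSpace ℝ (Fin n) → ℂ) :
    EuclideanSpace ℝ (Fin n) × EuclideanSpace ℝ (Fin n) → ℂ :=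
  fun z => fderiv ℝ f z v

theorem pX_eq_Dop (j : Fin n) : pX j = Dop (EuclideanSpace.single j 1, 0) := rfl

theorem pEta_eq_Dop (j : Fin n) : pEta j = Dop (0, EuclideanSpace.single j 1) := rfl

/-- Smoothness predicate used throughout. -/
def Sm (f : EuclideanSpace ℝ (Fin n) × EuclideanSpace ℝ (Fin n) → ℂ) : Prop :=
  ContDiff ℝ (⊤ : ℕ∞) f

theorem sm_dop {f : PS → ℂ} (hf : Sm f) (v : PS) : Sm (Dop v f) := by
  have h1 : ContDiff ℝ (⊤ : ℕ∞) (fderiv ℝ f) := hf.fderiv_right (by simp)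
  exact h1.clm_apply contDiff_const

theorem sm_diff {f : PS → ℂ} (hf : Sm f) : Differentiable ℝ f :=
  hf.differentiable (by simp)

theorem dEta_apply (j : Fin n) (f : PS → ℂ) (z : PS) :
    dEta j f z = f (z + (0, EuclideanSpace.single j 1)) - f z := by
  have : (z.1, z.2 + EuclideanSpace.single j 1) = z + (0, EuclideanSpace.single j 1) := by
    ext <;> simp
  rw [dEta, this]

theorem sm_dEta {f : PS → ℂ} (hf : Sm f) (j : Fin n) : Sm (_root_.dEta j f) := by
  have h1 : Sm (fun z : PS => f (z + (0, EuclideanSpace.single j 1))) :=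
    hf.comp (contDiff_id.add contDiff_const)
  have h2 : Sm (fun z : PS => f (z + (0, EuclideanSpace.single j 1)) - f z) := h1.sub hf
  have : dEta j f = fun z : PS => f (z + (0, EuclideanSpace.single j 1)) - f z := by
    funext z; exact dEta_apply j f z
  rwa [this]

/-- Translation commutes with directional derivatives. -/
theorem dop_dEta_comm {f : PS → ℂ} (hf : Sm f) (v : PS) (j : Fin n) :
    Dop v (dEta j f) = dEta j (Dop v f) := by
  set c : PS := (0, EuclideanSpace.single j 1) with hc
  funext z
  have htr : HasFDerivAt (fun w : PS => f (w + c)) (fderiv ℝ f (z + c)) z := by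
    have h1 : HasFDerivAt f (fderiv ℝ f (z + c)) (z + c) := (sm_diff hf (z + c)).hasFDerivAt
    have h2 : HasFDerivAt (fun w : PS => w + c) (ContinuousLinearMap.id ℝ PS) z :=
      (hasFDerivAt_id z).add_const c
    have h3 := h1.comp z h2
    rw [ContinuousLinearMap.comp_id] at h3
    exact h3
  have hsub : HasFDerivAt (fun w : PS => f (w + c) - f w)
      (fderiv ℝ f (z + c) - fderiv ℝ f z) z :=
    htr.sub (sm_diff hf z).hasFDerivAt
  have hEq : dEta j f = fun w : PS => f (w + c) - f w := by
    funext w; exact dEta_apply j f w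
  calc Dop v (dEta j f) z = fderiv ℝ (fun w : PS => f (w + c) - f w) z v := by
        rw [Dop, hEq]
    _ = (fderiv ℝ f (z + c) - fderiv ℝ f z) v := by rw [hsub.fderiv]
    _ = Dop v f (z + c) - Dop v f z := by
        simp [Dop, ContinuousLinearMap.sub_apply]
    _ = dEta j (Dop v f) z := (dEta_apply j (Dop v f) z).symm

/-- Schwarz symmetry: directional derivatives commute on smooth functions. -/
theorem dop_dop_comm {f : PS → ℂ} (hf : Sm f) (u v : PS) :
    Dop u (Dop v f) = Dop v (Dop u f) := by
  have hd : ContDiff ℝ (⊤ : ℕ∞) (fderiv ℝ f) := hf.fderiv_right (by simp)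
  have hdd : Differentiable ℝ (fderiv ℝ f) := hd.differentiable (by simp)
  have key : ∀ w w' : PS,
      Dop w (Dop w' f) = fun z => fderiv ℝ (fderiv ℝ f) z w w' := by
    intro w w'
    funext z
    have h1 : fderiv ℝ (fun y : PS => fderiv ℝ f y w') z
        = (fderiv ℝ f z).comp (fderiv ℝ (fun _ : PS => w') z)
            + (fderiv ℝ (fderiv ℝ f) z).flip w' :=
      fderiv_clm_apply (hdd z) (differentiableAt_const w')
    have h2 : Dop w (Dop w' f) z = fderiv ℝ (fun y : PS => fderiv ℝ f y w') z w := rfl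
    rw [h2, h1]
    simp
  rw [key u v, key v u]
  funext z
  exact second_derivative_symmetric (f := f) (fun y => (sm_diff hf y).hasFDerivAt)
    (hdd z).hasFDerivAt u v

/-- The weight function. -/
def Wgt (η : EuclideanSpace ℝ (Fin n)) : ℝ := Real.sqrt (1 + ‖η‖ ^ 2)

theorem one_le_Wgt (η : EuclideanSpace ℝ (Fin n)) : 1 ≤ Wgt η := by
  have h : Real.sqrt 1 ≤ Real.sqrt (1 + ‖η‖ ^ 2) :=
    Real.sqrt_le_sqrt (by nlinarith [sq_nonneg ‖η‖])
  simpa [Real.sqrt_one, Wgt] using h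

theorem Wgt_pos (η : EuclideanSpace ℝ (Fin n)) : 0 < Wgt η :=
  lt_of_lt_of_le one_pos (one_le_Wgt η)

theorem Wgt_add_le (η v : EuclideanSpace ℝ (Fin n)) : Wgt (η + v) ≤ Wgt η + ‖v‖ := by
  have h1 : ‖η + v‖ ≤ ‖η‖ + ‖v‖ := norm_add_le η v
  have h2 : Wgt η ^ 2 = 1 + ‖η‖ ^ 2 := Real.sq_sqrt (by positivity)
  have h0 : (0:ℝ) ≤ Wgt η := Real.sqrt_nonneg _
  have h3 : ‖η‖ ≤ Wgt η := by
    nlinarith [h2, h0, norm_nonneg η]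
  have h4 : (1 : ℝ) + ‖η + v‖ ^ 2 ≤ (Wgt η + ‖v‖) ^ 2 := by
    nlinarith [h1, h2, h3, norm_nonneg (η + v), norm_nonneg η, norm_nonneg v]
  calc Wgt (η + v) = Real.sqrt (1 + ‖η + v‖ ^ 2) := rfl
    _ ≤ Real.sqrt ((Wgt η + ‖v‖) ^ 2) := Real.sqrt_le_sqrt h4
    _ = Wgt η + ‖v‖ := Real.sqrt_sq (add_nonneg h0 (norm_nonneg v))

theorem Wgt_le_two_mul (η v : EuclideanSpace ℝ (Fin n)) (hv : ‖v‖ ≤ 1) :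
    Wgt (η + v) ≤ 2 * Wgt η := by
  have := Wgt_add_le η v
  have := one_le_Wgt η
  linarith

theorem two_mul_Wgt_ge (η v : EuclideanSpace ℝ (Fin n)) (hv : ‖v‖ ≤ 1) :
    Wgt η ≤ 2 * Wgt (η + v) := by
  have h1 : Wgt ((η + v) + (-v)) ≤ Wgt (η + v) + ‖(-v)‖ := Wgt_add_le (η + v) (-v)
  have h2 : (η + v) + (-v) = η := by abel
  rw [h2, norm_neg] at h1
  have := one_le_Wgt (η + v)
  linarith

/-- Peetre-type comparison of weights under shifts of size at most 1. -/
theorem Wgt_rpow_le (s : ℝ) (η v : EuclideanSpace ℝ (Fin n)) (hv : ‖v‖ ≤ 1) :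
    Wgt (η + v) ^ s ≤ 2 ^ |s| * Wgt η ^ s := by
  have ha : (0:ℝ) < Wgt (η + v) := Wgt_pos _
  have hc : (0:ℝ) < Wgt η := Wgt_pos _
  rcases le_or_gt 0 s with hs | hs
  · rw [abs_of_nonneg hs]
    calc Wgt (η + v) ^ s ≤ (2 * Wgt η) ^ s :=
          Real.rpow_le_rpow ha.le (Wgt_le_two_mul η v hv) hs
      _ = 2 ^ s * Wgt η ^ s := Real.mul_rpow (by norm_num) hc.le
  · rw [abs_of_neg hs]
    have hle : Wgt η / 2 ≤ Wgt (η + v) := by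
      have := two_mul_Wgt_ge η v hv; linarith
    calc Wgt (η + v) ^ s ≤ (Wgt η / 2) ^ s :=
          Real.rpow_le_rpow_of_nonpos (by positivity) hle hs.le
      _ = Wgt η ^ s / 2 ^ s := Real.div_rpow hc.le (by norm_num) s
      _ = 2 ^ (-s) * Wgt η ^ s := by
          rw [Real.rpow_neg (by norm_num)]
          field_simp
      _ = 2 ^ (-s) * Wgt η ^ s := rfl

/-- Mean value bound for the forward difference. -/
theorem dEta_norm_le {f : PS → ℂ} (hf : Sm f) (j : Fin n) (z : PS) (K : ℝ)
    (hK : ∀ t ∈ Set.Icc (0:ℝ) 1,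
      ‖pEta j f (z.1, z.2 + t • EuclideanSpace.single j 1)‖ ≤ K) :
    ‖dEta j f z‖ ≤ K := by
  set w : PS := (0, EuclideanSpace.single j 1) with hw
  set φ : ℝ → ℂ := fun t => f (z + t • w) with hφ
  have hψ : ∀ t : ℝ, HasDerivAt (fun t : ℝ => z + t • w) w t := by
    intro t
    simpa using ((hasDerivAt_id t).smul_const w).const_add z
  have hder : ∀ t : ℝ, HasDerivAt φ (fderiv ℝ f (z + t • w) w) t := by
    intro t
    exact ((sm_diff hf (z + t • w)).hasFDerivAt).comp_hasDerivAt t (hψ t)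
  have hpt : ∀ t : ℝ, z + t • w = (z.1, z.2 + t • EuclideanSpace.single j 1) := by
    intro t
    ext <;> simp [hw, Prod.smul_def]
  have hbound : ∀ t ∈ Set.Ico (0:ℝ) 1, ‖fderiv ℝ f (z + t • w) w‖ ≤ K := by
    intro t ht
    have h1 : fderiv ℝ f (z + t • w) w
        = pEta j f (z.1, z.2 + t • EuclideanSpace.single j 1) := by
      rw [hpt t]; rfl
    rw [h1]
    exact hK t ⟨ht.1, ht.2.le⟩
  have hmv := norm_image_sub_le_of_norm_deriv_le_segment'
    (f := φ) (f' := fun t => fderiv ℝ f (z + t • w) w) (a := 0) (b := 1)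
    (fun t _ => (hder t).hasDerivWithinAt) hbound 1 (by norm_num)
  have hφ1 : φ 1 = f (z.1, z.2 + EuclideanSpace.single j 1) := by
    rw [hφ]
    simp only []
    rw [hpt 1, one_smul]
  have hφ0 : φ 0 = f z := by
    rw [hφ]; simp
  have : dEta j f z = φ 1 - φ 0 := by rw [hφ1, hφ0]; rfl
  rw [this]
  simpa using hmv

end SymbolAux

theorem hormander_symbol_restricts_to_toroidal_symbol
    (n : ℕ) (m : ℝ)
    (b : EuclideanSpace ℝ (Fin n) × EuclideanSpace ℝ (Fin n) → ℂ)
    (hb : ContDiff ℝ (⊤ : ℕ∞) b)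
    (hper : ∀ x η (j : Fin n), b (x + EuclideanSpace.single j (2 * Real.pi), η) = b (x, η))
    (hsym : ∀ α β : Fin n → ℕ, ∃ C > (0:ℝ), ∀ z,
      ‖multiOp pX α (multiOp pEta β b) z‖ ≤
        C * Real.sqrt (1 + ‖z.2‖^2) ^ (m - ∑ j, (β j : ℝ))) :
    ∀ α β : Fin n → ℕ, ∃ C' > (0:ℝ), ∀ z,
      ‖multiOp pX α (multiOp dEta β b) z‖ ≤
        C' * Real.sqrt (1 + ‖z.2‖^2) ^ (m - ∑ j, (β j : ℝ)) := by
  -- basic smoothness facts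
  have hbSm : Sm b := hb
  have hpX : ∀ (j : Fin n) f, Sm f → Sm (pX j f) := by
    intro j f hf; rw [pX_eq_Dop]; exact sm_dop hf _
  have hpEta : ∀ (j : Fin n) f, Sm f → Sm (pEta j f) := by
    intro j f hf; rw [pEta_eq_Dop]; exact sm_dop hf _
  have hdEta : ∀ (j : Fin n) f, Sm f → Sm (dEta j f) := fun j f hf => sm_dEta hf j
  have hpp : ∀ (i i' : Fin n) f, Sm f → pEta i (pEta i' f) = pEta i' (pEta i f) := by
    intro i i' f hf
    rw [pEta_eq_Dop, pEta_eq_Dop]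
    exact dop_dop_comm hf _ _
  -- main induction on the list of difference operators
  have key : ∀ L : List (Fin n), ∀ α γ : Fin n → ℕ, ∃ C > (0:ℝ), ∀ z,
      ‖multiOp pX α (multiOp pEta γ (compAll (L.map dEta) b)) z‖ ≤
        C * Wgt z.2 ^ (m - ∑ j, (γ j : ℝ) - L.length) := by
    intro L
    induction L with
    | nil =>
      intro α γ
      obtain ⟨C, hC, h⟩ := hsym α γ
      exact ⟨C, hC, fun z => by simpa [compAll_nil, Wgt] using h z⟩
    | cons j L ih =>
      intro α γ
      set γ' : Fin n → ℕ := fun i => γ i + if i = j then 1 else 0 with hγ'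
      obtain ⟨C, hC, hIH⟩ := ih α γ'
      set s : ℝ := m - ∑ i, (γ i : ℝ) - (L.length + 1) with hs
      have hsum : (∑ i, (γ' i : ℝ)) = (∑ i, (γ i : ℝ)) + 1 := by
        rw [hγ']
        push_cast
        rw [Finset.sum_add_distrib]
        congr 1
        simp
      have hsexp : m - ∑ i, (γ' i : ℝ) - L.length = s := by
        rw [hsum, hs]; ring
      set G : EuclideanSpace ℝ (Fin n) × EuclideanSpace ℝ (Fin n) → ℂ :=
        compAll (L.map dEta) b with hG
      have hGSm : Sm G := by
        refine pr_compAll Sm _ ?_ b hbSm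
        intro g hg f hf
        simp only [List.mem_map] at hg
        obtain ⟨i, -, rfl⟩ := hg
        exact sm_dEta hf i
      have hKSm : Sm (multiOp pEta γ G) := pr_multiOp Sm pEta γ hpEta G hGSm
      set H : EuclideanSpace ℝ (Fin n) × EuclideanSpace ℝ (Fin n) → ℂ :=
        multiOp pX α (multiOp pEta γ G) with hH
      have hHSm : Sm H := pr_multiOp Sm pX α hpX _ hKSm
      -- the function whose norm we bound equals `dEta j H`
      have hfun : multiOp pX α (multiOp pEta γ (compAll ((j :: L).map dEta) b))
          = dEta j H := by
        have h0 : compAll ((j :: L).map dEta) b = dEta j G := rfl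
        rw [h0]
        have h1 : multiOp pEta γ (dEta j G) = dEta j (multiOp pEta γ G) := by
          refine (comm_multiOp Sm (dEta j) pEta γ hpEta ?_ G hGSm).symm
          intro i f hf
          rw [pEta_eq_Dop]
          exact (dop_dEta_comm hf _ j).symm
        rw [h1]
        refine (comm_multiOp Sm (dEta j) pX α hpX ?_ _ hKSm).symm
        intro i f hf
        rw [pX_eq_Dop]
        exact (dop_dEta_comm hf _ j).symm
      -- the derivative of H in direction η_j is the IH function
      have hder : pEta j H = multiOp pX α (multiOp pEta γ' G) := by
        have h1 : pEta j H = multiOp pX α (pEta j (multiOp pEta γ G)) := by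
          rw [hH]
          refine comm_multiOp Sm (pEta j) pX α hpX ?_ _ hKSm
          intro i f hf
          rw [pX_eq_Dop, pEta_eq_Dop]
          exact dop_dop_comm hf _ _
        have h2 : pEta j (multiOp pEta γ G) = multiOp pEta γ' G :=
          (multiOp_succ Sm pEta γ j hpEta hpp G hGSm).symm
        rw [h1, h2]
      refine ⟨C * 2 ^ |s|, by positivity, ?_⟩
      intro z
      rw [hfun]
      -- apply the mean value bound
      have hWpos := Wgt_pos (n := n) z.2
      refine le_trans (dEta_norm_le hHSm j z (C * 2 ^ |s| * Wgt z.2 ^ s) ?_) ?_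
      · intro t ht
        have hnorm : ‖t • EuclideanSpace.single (𝕜 := ℝ) j (1:ℝ)‖ ≤ 1 := by
          rw [norm_smul, EuclideanSpace.norm_single]
          simp only [Real.norm_eq_abs, norm_one, mul_one]
          rw [abs_of_nonneg ht.1]
          exact ht.2
        have h1 : ‖pEta j H (z.1, z.2 + t • EuclideanSpace.single j 1)‖ ≤
            C * Wgt (z.2 + t • EuclideanSpace.single j 1) ^ s := by
          rw [hder]
          have := hIH (z.1, z.2 + t • EuclideanSpace.single j 1)
          rwa [hsexp] at this
        refine h1.trans ?_
        have h2 : Wgt (z.2 + t • EuclideanSpace.single j 1) ^ s ≤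
            2 ^ |s| * Wgt z.2 ^ s := Wgt_rpow_le s z.2 _ hnorm
        calc C * Wgt (z.2 + t • EuclideanSpace.single j 1) ^ s
            ≤ C * (2 ^ |s| * Wgt z.2 ^ s) := by
              exact mul_le_mul_of_nonneg_left h2 hC.le
          _ = C * 2 ^ |s| * Wgt z.2 ^ s := by ring
      · have hlen : ((j :: L).length : ℝ) = (L.length : ℝ) + 1 := by
          simp
        rw [hlen]
  -- conclude
  intro α β
  obtain ⟨C, hC, h⟩ := key (idxList β) α (fun _ => 0)
  refine ⟨C, hC, ?_⟩
  intro z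
  have h1 : multiOp pX α (multiOp dEta β b) z
      = multiOp pX α (multiOp pEta (fun _ => 0) (compAll ((idxList β).map dEta) b)) z := by
    rw [multiOp_eq_compAll dEta β]
    congr 1
    rw [multiOp_zero]
  have h2 : m - (∑ _j : Fin n, ((0:ℕ) : ℝ)) - ((idxList β).length : ℝ)
      = m - ∑ j, (β j : ℝ) := by
    rw [idxList_length]
    push_cast
    simp
  rw [h1]
  have := h z
  rw [h2] at this
  simpa [Wgt] using this

end
end

section
/- Let $\psi : \mathbb{R}^n \to \mathbb{C}$ be smooth and $2\pi$-periodic in each coordinate, and define $W\psi(x,\kappa) := (2\pi)^{-n} \int_{[0,2\pi]^n} e^{i\langle z,\kappa\rangle} \psi(x-z) \overline{\psi(x+z)}\, dz$ for $x \in \mathbb{R}^n$, $\kappa \in \mathbb{Z}^n$. Then for every $N \in \mathbb{N}$ and all multi-indices $\alpha, \beta \in \mathbb{Z}_+^n$ there exists a constant $C_{N\alpha\beta} > 0$ such that $|\partial_x^\alpha \Delta_\kappa^\beta\, W\psi(x,\kappa)| \le C_{N\alpha\beta} \langle\kappa\rangle^{-N}$ for all $x \in \mathbb{R}^n$ and $\kappa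 \in \mathbb{Z}^n$; that is, the Wigner transform of a smooth function is a toroidal symbol of order $-\infty$. -/
open MeasureTheory

noncomputable section

/-- A complex-valued function on `ℝⁿ` that is `2π`-periodic in each coordinate. -/
def IsPeriodicC {n : ℕ} (f : EuclideanSpace ℝ (Fin n) → ℂ) : Prop :=
  ∀ (x : EuclideanSpace ℝ (Fin n)) (j : Fin n),
    f (x + EuclideanSpace.single j (2 * Real.pi)) = f x

/-- The fundamental cube `[0,2π]ⁿ`. -/
def box (n : ℕ) : Set (EuclideanSpace ℝ (Fin n)) :=
  {z | ∀ j, z j ∈ Set.Icc (0:ℝ) (2 * Real.pi)}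

/-- The pairing `⟨z,κ⟩ = ∑ⱼ zⱼ κⱼ` between `ℝⁿ` and `ℤⁿ`. -/
def idot {n : ℕ} (z : EuclideanSpace ℝ (Fin n)) (κ : Fin n → ℤ) : ℝ :=
  ∑ j, z j * (κ j : ℝ)

/-- The toroidal Wigner transform `Wψ(x,κ)`. -/
def wig {n : ℕ} (ψ : EuclideanSpace ℝ (Fin n) → ℂ)
    (x : EuclideanSpace ℝ (Fin n)) (κ : Fin n → ℤ) : ℂ :=
  (((2 * Real.pi)^n : ℝ) : ℂ)⁻¹ *
    ∫ z in box n, Complex.exp (Complex.I * (idot z κ : ℝ)) * (ψ (x - z) * starRingEnd ℂ (ψ (x + z)))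

/-- Partial derivative in the `j`-th `x`-direction of a toroidal symbol on `ℝⁿ × ℤⁿ`. -/
def pXtor {n : ℕ} (j : Fin n)
    (f : EuclideanSpace ℝ (Fin n) → (Fin n → ℤ) → ℂ) :
    EuclideanSpace ℝ (Fin n) → (Fin n → ℤ) → ℂ :=
  fun x κ => fderiv ℝ (fun x' => f x' κ) x (EuclideanSpace.single j 1)

/-- Forward difference in the `j`-th `κ`-direction of a toroidal symbol on `ℝⁿ × ℤⁿ`. -/
def dK {n : ℕ} (j : Fin n)
    (f : EuclideanSpace ℝ (Fin n) → (Fin n → ℤ) → ℂ) :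
    EuclideanSpace ℝ (Fin n) → (Fin n → ℤ) → ℂ :=
  fun x κ => f x (κ + Pi.single j 1) - f x κ

namespace WigAux

open Submodule Pointwise

/-! ### Generic periodicity machinery -/

/-- generic periodicity w.r.t. a single period vector -/
def Per {A F : Type*} [AddCommGroup A] (c : A) (f : A → F) : Prop := ∀ p, f (p + c) = f p

lemma Per.sub' {A F : Type*} [AddCommGroup A] {c : A} {f : A → F} (h : Per c f) (p : A) :
    f (p - c) = f p := by
  have := h (p - c); rw [sub_add_cancel] at this; exact this.symm

lemma Per.zsmul {A F : Type*} [AddCommGroup A] {c : A} {f : A → F} (h : Per c f) (k : ℤ)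
    (p : A) : f (p + k • c) = f p := by
  induction k using Int.induction_on with
  | zero => simp
  | succ m ih =>
      have : p + ((m : ℤ) + 1) • c = (p + (m:ℤ) • c) + c := by
        rw [add_smul, one_smul, add_assoc]
      rw [this, h, ih]
  | pred m ih =>
      have : p + (-(m : ℤ) - 1) • c = (p + (-(m:ℤ)) • c) - c := by
        rw [sub_smul, one_smul, add_sub_assoc]
      rw [this, h.sub', ih]

lemma per_sum_shift {A F ι : Type*} [AddCommGroup A] [Fintype ι] {f : A → F} {v : ι → A}
    (hper : ∀ i, Per (v i) f) (k : ι → ℤ) (x : A) : f (x + ∑ i, k i • v i) = f x := by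
  classical
  have H : ∀ s : Finset ι, ∀ x, f (x + ∑ i ∈ s, k i • v i) = f x := by
    intro s
    induction s using Finset.induction_on with
    | empty => simp
    | insert a s hni ih =>
        intro x
        rw [Finset.sum_insert hni, ← add_assoc]
        rw [ih (x + k a • v a)]
        exact (hper a).zsmul (k a) x
  exact H Finset.univ x

lemma bounded_of_reduction {A F : Type*} [TopologicalSpace A] [NormedAddCommGroup F]
    {f : A → F} {K : Set A} (hK : IsCompact K) (hf : Continuous f)
    (hred : ∀ p, ∃ q ∈ K, f p = f q) : ∃ M : ℝ, 0 ≤ M ∧ ∀ p, ‖f p‖ ≤ M := by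
  obtain ⟨C, hC⟩ := hK.exists_bound_of_continuousOn hf.continuousOn
  refine ⟨max C 0, le_max_right _ _, fun p => ?_⟩
  obtain ⟨q, hq, he⟩ := hred p
  rw [he]
  exact le_trans (hC q hq) (le_max_left _ _)

variable {n : ℕ}

/-! ### The box -/

lemma two_pi_pos : (0:ℝ) < 2 * Real.pi := by positivity

lemma box_eq : box n = (EuclideanSpace.equiv (Fin n) ℝ) ⁻¹' Set.pi Set.univ (fun _ : Fin n => Set.Icc (0:ℝ) (2*Real.pi)) := by
  ext z; exact ⟨fun h j _ => h j, fun h j => h j (Set.mem_univ j)⟩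

lemma isCompact_box : IsCompact (box n) := by
  rw [box_eq]; exact (EuclideanSpace.equiv (Fin n) ℝ).toHomeomorph.isCompact_preimage.mpr
    (isCompact_univ_pi fun _ => isCompact_Icc)

lemma measurableSet_box : MeasurableSet (box n) :=
  isCompact_box.isClosed.measurableSet

lemma volume_box_lt_top : volume (box n) < ⊤ := isCompact_box.measure_lt_top

lemma sum_single_apply (k : Fin n → ℤ) (j : Fin n) :
    (∑ i, k i • EuclideanSpace.single i (2 * Real.pi)) j = k j * (2 * Real.pi) := by
  classical
  have : (∑ i, k i • EuclideanSpace.single i (2 * Real.pi)) j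
      = ∑ i, (k i • EuclideanSpace.single i (2 * Real.pi)) j :=
    by rw [WithLp.ofLp_sum, Finset.sum_apply]
  rw [this, Finset.sum_eq_single j]
  · simp [EuclideanSpace.single_apply]
  · intro i _ hij
    simp [EuclideanSpace.single_apply, (Ne.symm hij)]
  · simp

lemma exists_shift_mem_box (x : EuclideanSpace ℝ (Fin n)) :
    ∃ k : Fin n → ℤ, (x + ∑ i, k i • EuclideanSpace.single i (2 * Real.pi)) ∈ box n := by
  refine ⟨fun j => -⌊x j / (2 * Real.pi)⌋, fun j => ?_⟩
  have hx : (x + ∑ i, (fun j => -⌊x j / (2 * Real.pi)⌋) i • EuclideanSpace.single i (2 * Real.pi)) j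
      = x j + (-⌊x j / (2 * Real.pi)⌋ : ℤ) * (2 * Real.pi) := by
    have := sum_single_apply (n := n) (fun j => -⌊x j / (2 * Real.pi)⌋) j
    calc _ = x j + (∑ i, (fun j => -⌊x j / (2 * Real.pi)⌋) i •
              EuclideanSpace.single i (2 * Real.pi)) j := rfl
    _ = _ := by rw [this]
  rw [hx]
  have h2π : (0:ℝ) < 2 * Real.pi := two_pi_pos
  constructor
  · have := Int.sub_floor_div_mul_nonneg (x j) h2π
    push_cast
    linarith
  · have := Int.sub_floor_div_mul_lt (x j) h2π
    push_cast
    linarith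

/-- reduction to the box for functions periodic in every coordinate -/
lemma reduction_box {F : Type*} {f : EuclideanSpace ℝ (Fin n) → F}
    (hper : ∀ j, Per (EuclideanSpace.single j (2 * Real.pi)) f) (x : EuclideanSpace ℝ (Fin n)) :
    ∃ q ∈ box n, f x = f q := by
  obtain ⟨k, hk⟩ := exists_shift_mem_box x
  exact ⟨_, hk, (per_sum_shift hper k x).symm⟩

/-! ### Lattice and translation invariance of the box integral -/

/-- the scaled basis with vectors `2π eⱼ` -/
def lb (n : ℕ) : Module.Basis (Fin n) ℝ (EuclideanSpace ℝ (Fin n)) :=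
  (EuclideanSpace.basisFun (Fin n) ℝ).toBasis.unitsSMul
    (fun _ => Units.mk0 (2 * Real.pi) (ne_of_gt two_pi_pos))

lemma lb_repr (x : EuclideanSpace ℝ (Fin n)) (i : Fin n) :
    (lb n).repr x i = x i / (2 * Real.pi) := by
  rw [lb, Module.Basis.repr_unitsSMul]
  rw [(EuclideanSpace.basisFun (Fin n) ℝ).coe_toBasis_repr_apply, EuclideanSpace.basisFun_repr]
  simp [Units.smul_def, div_eq_inv_mul]

lemma lb_apply (i : Fin n) : lb n i = EuclideanSpace.single i (2 * Real.pi) := by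
  rw [lb, Module.Basis.unitsSMul_apply]
  ext j
  rw [Units.smul_def]
  simp only [PiLp.smul_apply, EuclideanSpace.single_apply, OrthonormalBasis.coe_toBasis,
    EuclideanSpace.basisFun_apply, smul_eq_mul]
  split_ifs <;> simp

lemma volume_eq_pi :
    Measure.map (fun z : EuclideanSpace ℝ (Fin n) => z.ofLp) volume
      = Measure.pi fun _ => volume :=
  (PiLp.volume_preserving_ofLp (Fin n)).map_eq

lemma hyperplane_null (j : Fin n) (c : ℝ) :
    volume {z : EuclideanSpace ℝ (Fin n) | z j = c} = 0 := by
  have hm : MeasurableSet {y : Fin n → ℝ | y j = c} :=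
    (measurableSet_singleton c).preimage (measurable_pi_apply j)
  have := Measure.pi_hyperplane (fun _ => (volume : Measure ℝ)) j c
  rw [← volume_eq_pi, Measure.map_apply (PiLp.volume_preserving_ofLp (Fin n)).measurable hm] at this
  exact this

lemma box_ae_eq_fd :
    (box n : Set (EuclideanSpace ℝ (Fin n))) =ᵐ[volume] ZSpan.fundamentalDomain (lb n) := by
  have hfd : ZSpan.fundamentalDomain (lb n)
      = {z : EuclideanSpace ℝ (Fin n) | ∀ j, z j ∈ Set.Ico (0:ℝ) (2*Real.pi)} := by
    ext z
    simp only [ZSpan.mem_fundamentalDomain, lb_repr, Set.mem_Ico, Set.mem_setOf_eq]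
    refine forall_congr' fun i => ?_
    rw [div_nonneg_iff, div_lt_one two_pi_pos]
    constructor
    · rintro ⟨h1, h2⟩
      constructor
      · rcases h1 with ⟨h,_⟩ | ⟨h,h'⟩
        · exact h
        · exact absurd h' (not_le.2 two_pi_pos)
      · exact h2
    · rintro ⟨h1, h2⟩
      exact ⟨Or.inl ⟨h1, le_of_lt two_pi_pos⟩, h2⟩
  rw [hfd]
  rw [Filter.eventuallyEq_set]
  have hnull : volume (⋃ j, {z : EuclideanSpace ℝ (Fin n) | z j = 2 * Real.pi}) = 0 :=
    measure_iUnion_null fun j => hyperplane_null j _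
  rw [← compl_mem_ae_iff] at hnull
  filter_upwards [hnull] with z hz
  simp only [Set.mem_compl_iff, Set.mem_iUnion, Set.mem_setOf_eq, not_exists] at hz
  simp only [box, Set.mem_setOf_eq, Set.mem_Icc, Set.mem_Ico]
  refine forall_congr' fun j => ?_
  constructor
  · rintro ⟨h1,h2⟩; exact ⟨h1, lt_of_le_of_ne h2 (hz j)⟩
  · rintro ⟨h1,h2⟩; exact ⟨h1, le_of_lt h2⟩

instance okVAddComm {A : Type*} [AddCommGroup A] (S : Submodule ℤ A) : VAddCommClass A ↥S A :=
  ⟨fun a g x => by change a + ((g:A) + x) = (g:A) + (a + x); rw [add_left_comm]⟩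

instance okMeasVAdd {S : Submodule ℤ (EuclideanSpace ℝ (Fin n))} :
    MeasurableVAdd ↥S (EuclideanSpace ℝ (Fin n)) where
  measurable_const_vadd g := measurable_const_add (g : EuclideanSpace ℝ (Fin n))
  measurable_vadd_const x := (measurable_subtype_coe).add_const x

instance okVAddInv {S : Submodule ℤ (EuclideanSpace ℝ (Fin n))} :
    VAddInvariantMeasure ↥S (EuclideanSpace ℝ (Fin n)) volume :=
  ⟨fun g s _ => measure_preimage_add volume (g : EuclideanSpace ℝ (Fin n)) s⟩

lemma lattice_inv {F : Type*} {f : EuclideanSpace ℝ (Fin n) → F}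
    (hper : ∀ j, Per (EuclideanSpace.single j (2 * Real.pi)) f)
    (g : span ℤ (Set.range ⇑(lb n))) (x : EuclideanSpace ℝ (Fin n)) : f (g +ᵥ x) = f x := by
  obtain ⟨v, hv⟩ := g
  have : ∀ v ∈ span ℤ (Set.range ⇑(lb n)), ∀ x, f (v + x) = f x := by
    intro v hv
    induction hv using Submodule.span_induction with
    | mem v hmem =>
        obtain ⟨i, rfl⟩ := hmem
        intro x
        rw [lb_apply, add_comm]
        exact hper i x
    | zero => intro x; rw [zero_add]
    | add u w _ _ hu hw =>
        intro x
        rw [add_assoc, hu, hw]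
    | smul k u _ hu =>
        intro x
        have hpu : Per u f := fun p => by rw [add_comm]; exact hu p
        rw [add_comm]
        exact hpu.zsmul k x
  exact this v hv x

/-- translation invariance of the box integral for periodic functions -/
lemma integral_box_add_right (H : EuclideanSpace ℝ (Fin n) → ℂ)
    (hper : ∀ j, Per (EuclideanSpace.single j (2 * Real.pi)) H) (h : EuclideanSpace ℝ (Fin n)) :
    ∫ z in box n, H (z + h) = ∫ z in box n, H z := by
  set b := lb n
  have hfd : IsAddFundamentalDomain (span ℤ (Set.range ⇑b)) (ZSpan.fundamentalDomain b) volume :=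
    ZSpan.isAddFundamentalDomain b volume
  have hfd2 : IsAddFundamentalDomain (span ℤ (Set.range ⇑b)) (h +ᵥ ZSpan.fundamentalDomain b)
      volume := hfd.vadd_of_comm h
  have hinv : ∀ (g : span ℤ (Set.range ⇑b)) (x : EuclideanSpace ℝ (Fin n)), H (g +ᵥ x) = H x :=
    fun g x => lattice_inv hper g x
  have hmp : MeasurePreserving (fun z : EuclideanSpace ℝ (Fin n) => z + h) volume volume :=
    measurePreserving_add_right volume h
  have hemb : MeasurableEmbedding (fun z : EuclideanSpace ℝ (Fin n) => z + h) :=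
    (MeasurableEquiv.addRight h).measurableEmbedding
  have himg : (fun z : EuclideanSpace ℝ (Fin n) => z + h) '' (ZSpan.fundamentalDomain b)
      = h +ᵥ ZSpan.fundamentalDomain b := by
    ext y
    simp only [Set.mem_image, Set.mem_vadd_set]
    constructor
    · rintro ⟨z, hz, rfl⟩; exact ⟨z, hz, by rw [vadd_eq_add, add_comm]⟩
    · rintro ⟨z, hz, rfl⟩; exact ⟨z, hz, by rw [vadd_eq_add, add_comm]⟩
  calc ∫ z in box n, H (z + h) = ∫ z in ZSpan.fundamentalDomain b, H (z + h) :=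
        setIntegral_congr_set box_ae_eq_fd
    _ = ∫ y in (fun z : EuclideanSpace ℝ (Fin n) => z + h) '' (ZSpan.fundamentalDomain b), H y :=
        (hmp.setIntegral_image_emb hemb H _).symm
    _ = ∫ y in h +ᵥ ZSpan.fundamentalDomain b, H y := by rw [himg]
    _ = ∫ y in ZSpan.fundamentalDomain b, H y := hfd2.setIntegral_eq hfd hinv
    _ = ∫ z in box n, H z := (setIntegral_congr_set box_ae_eq_fd).symm

/-! ### Difference and directional-derivative calculus -/

section Calc
variable {A F : Type*} [NormedAddCommGroup A] [NormedSpace ℝ A]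
  [NormedAddCommGroup F] [NormedSpace ℝ F]

/-- directional derivative operator -/
def dDir (u : A) (f : A → F) : A → F := fun p => fderiv ℝ f p u

/-- difference operator -/
def Tdiff (c : A) (f : A → F) : A → F := fun p => f p - f (p + c)

lemma fderiv_shift {f : A → F} (hf : Differentiable ℝ f) (c x : A) :
    fderiv ℝ (fun y => f (y + c)) x = fderiv ℝ f (x + c) := by
  have h1 : HasFDerivAt (fun y : A => y + c) (ContinuousLinearMap.id ℝ A) x :=
    (hasFDerivAt_id x).add_const c
  exact ((hf (x + c)).hasFDerivAt.comp x h1).fderiv.trans (by simp)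

lemma per_fderiv {f : A → F} (hf : Differentiable ℝ f) {c : A} (h : Per c f) :
    Per c (fun p => fderiv ℝ f p) := by
  intro p
  show fderiv ℝ f (p + c) = fderiv ℝ f p
  rw [← fderiv_shift hf c p]
  congr 1
  funext y
  exact h y

lemma per_dDir {f : A → F} (hf : Differentiable ℝ f) {c : A} (h : Per c f) (u : A) :
    Per c (dDir u f) := fun p => by
  unfold WigAux.dDir
  rw [show fderiv ℝ f (p + c) = fderiv ℝ f p from per_fderiv hf h p]

lemma contDiff_dDir {f : A → F} (hf : ContDiff ℝ (⊤ : ℕ∞) f) (u : A) : ContDiff ℝ (⊤ : ℕ∞) (dDir u f) :=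
  (hf.fderiv_right (by simp)).clm_apply contDiff_const

lemma per_tdiff {f : A → F} {c c' : A} (h : Per c f) : Per c (Tdiff c' f) := fun p => by
  unfold Tdiff
  rw [h p, add_right_comm, h (p + c')]

lemma contDiff_tdiff {f : A → F} (hf : ContDiff ℝ (⊤ : ℕ∞) f) (c : A) : ContDiff ℝ (⊤ : ℕ∞) (Tdiff c f) :=
  hf.sub (hf.comp ((contDiff_id).add contDiff_const))

lemma contDiff_tdiff_iter {f : A → F} (hf : ContDiff ℝ (⊤ : ℕ∞) f) (c : A) (m : ℕ) :
    ContDiff ℝ (⊤ : ℕ∞) ((Tdiff c)^[m] f) := by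
  induction m with
  | zero => exact hf
  | succ m ih => rw [Function.iterate_succ_apply']; exact contDiff_tdiff ih _

lemma dDir_tdiff_comm {f : A → F} (hf : ContDiff ℝ (⊤ : ℕ∞) f) (c u : A) :
    dDir u (Tdiff c f) = Tdiff c (dDir u f) := by
  funext p
  unfold dDir Tdiff
  have hd : Differentiable ℝ f := hf.differentiable (by simp)
  have : fderiv ℝ (fun q => f q - f (q + c)) p
      = fderiv ℝ f p - fderiv ℝ (fun q => f (q + c)) p := by
    apply fderiv_sub (hd p)
    exact (hd (p + c)).comp p ((differentiable_id.add_const c) p)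
  rw [this, fderiv_shift hd c p]
  simp

/-- mean value bound in a fixed direction -/
lemma norm_sub_le_of_dDir_bound {f : A → F} (hf : ContDiff ℝ (⊤ : ℕ∞) f) {u : A} {M : ℝ}
    (hM : ∀ q, ‖dDir u f q‖ ≤ M) (t : ℝ) (p : A) :
    ‖f p - f (p + t • u)‖ ≤ M * |t| := by
  have hd : Differentiable ℝ f := hf.differentiable (by simp)
  set g : ℝ → F := fun s => f (p + s • u) with hg
  have hgd : ∀ s : ℝ, HasDerivAt g (dDir u f (p + s • u)) s := by
    intro s
    have h1 : HasDerivAt (fun s : ℝ => p + s • u) u s := by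
      simpa using ((hasDerivAt_id s).smul_const u).const_add p
    have h2 : HasFDerivAt f (fderiv ℝ f (p + s • u)) (p + s • u) := (hd _).hasFDerivAt
    exact h2.comp_hasDerivAt s h1
  have key : ∀ x ∈ Set.univ, HasDerivWithinAt g (dDir u f (p + x • u)) Set.univ x :=
    fun x _ => (hgd x).hasDerivWithinAt
  have hb := convex_univ.norm_image_sub_le_of_norm_hasDerivWithin_le key
    (fun x _ => hM (p + x • u)) (Set.mem_univ (0:ℝ)) (Set.mem_univ t)
  have h0 : g 0 = f p := by simp [hg]
  have ht : g t = f (p + t • u) := rfl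
  rw [norm_sub_rev]
  calc ‖f (p + t • u) - f p‖ = ‖g t - g 0‖ := by rw [h0, ht]
    _ ≤ M * ‖t - 0‖ := hb
    _ = M * |t| := by rw [sub_zero, Real.norm_eq_abs]

/-- iterated difference bound -/
lemma tdiff_iter_bound (N : ℕ) :
    ∀ (f : A → F), ContDiff ℝ (⊤ : ℕ∞) f → ∀ (u : A) (t : ℝ) (M : ℝ),
      (∀ q, ‖(dDir u)^[N] f q‖ ≤ M) →
      ∀ p, ‖(Tdiff (t • u))^[N] f p‖ ≤ |t| ^ N * M := by
  induction N with
  | zero => intro f _ u t M hM p; simpa using hM p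
  | succ N ih =>
      intro f hf u t M hM p
      rw [Function.iterate_succ_apply']
      have hTN : ContDiff ℝ (⊤ : ℕ∞) ((Tdiff (t • u))^[N] f) := contDiff_tdiff_iter hf _ N
      have hcomm : dDir u ((Tdiff (t • u))^[N] f) = (Tdiff (t • u))^[N] (dDir u f) := by
        clear hM ih hTN
        induction N with
        | zero => rfl
        | succ N ih2 =>
            rw [Function.iterate_succ_apply', Function.iterate_succ_apply']
            rw [dDir_tdiff_comm (contDiff_tdiff_iter hf _ N), ih2]
      have hbound : ∀ q, ‖dDir u ((Tdiff (t • u))^[N] f) q‖ ≤ |t| ^ N * M := by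
        intro q
        rw [hcomm]
        exact ih (dDir u f) (contDiff_dDir hf u) u t M
          (fun q' => by rw [← Function.iterate_succ_apply]; exact hM q') q
      have := norm_sub_le_of_dDir_bound hTN hbound t p
      calc ‖Tdiff (t • u) ((Tdiff (t • u))^[N] f) p‖ ≤ (|t| ^ N * M) * |t| := this
        _ = |t| ^ (N + 1) * M := by ring

end Calc

/-! ### The oscillatory factor -/

lemma idot_add_left (z h : EuclideanSpace ℝ (Fin n)) (κ : Fin n → ℤ) :
    idot (z + h) κ = idot z κ + idot h κ := by
  unfold idot
  rw [← Finset.sum_add_distrib]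
  exact Finset.sum_congr rfl fun j _ => by
    show (z j + h j) * (κ j : ℝ) = _
    ring

lemma single_smul' (j : Fin n) (t : ℝ) :
    t • EuclideanSpace.single j (1:ℝ) = EuclideanSpace.single j t := by
  ext i
  simp only [PiLp.smul_apply, EuclideanSpace.single_apply, smul_eq_mul]
  split_ifs <;> simp

lemma idot_single (j : Fin n) (c : ℝ) (κ : Fin n → ℤ) :
    idot (EuclideanSpace.single j c) κ = c * κ j := by
  unfold idot
  rw [Finset.sum_eq_single j]
  · simp [EuclideanSpace.single_apply]
  · intro i _ hij; simp [EuclideanSpace.single_apply, hij]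
  · simp

def eκ (κ : Fin n → ℤ) (z : EuclideanSpace ℝ (Fin n)) : ℂ :=
  Complex.exp (Complex.I * (idot z κ : ℝ))

lemma eκ_norm (κ : Fin n → ℤ) (z : EuclideanSpace ℝ (Fin n)) : ‖eκ κ z‖ = 1 := by
  unfold eκ
  rw [mul_comm, Complex.norm_exp_ofReal_mul_I]

lemma eκ_add (κ : Fin n → ℤ) (z h : EuclideanSpace ℝ (Fin n)) :
    eκ κ (z + h) = eκ κ z * Complex.exp (Complex.I * (idot h κ : ℝ)) := by
  unfold eκ
  rw [idot_add_left, ← Complex.exp_add]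
  push_cast
  ring_nf

lemma eκ_per (κ : Fin n → ℤ) (j : Fin n) :
    ∀ z, eκ κ (z + EuclideanSpace.single j (2 * Real.pi)) = eκ κ z := by
  intro z
  rw [eκ_add, idot_single]
  have h1 : Complex.exp (Complex.I * ((2 * Real.pi * (κ j : ℝ) : ℝ) : ℂ)) = 1 := by
    have h2 := Complex.exp_int_mul_two_pi_mul_I (κ j)
    rw [← h2]
    congr 1
    push_cast
    ring
  rw [h1, mul_one]

lemma eκ_continuous (κ : Fin n → ℤ) : Continuous (eκ κ) := by
  unfold eκ
  apply Complex.continuous_exp.comp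
  apply continuous_const.mul
  apply Complex.continuous_ofReal.comp
  unfold idot
  exact continuous_finset_sum _ fun j _ =>
    ((EuclideanSpace.proj j).continuous).mul continuous_const

/-! ### The symbol class -/

/-- periodic in each coordinate of each factor -/
def PerB {F : Type*} (G : EuclideanSpace ℝ (Fin n) × EuclideanSpace ℝ (Fin n) → F) : Prop :=
  (∀ j, Per ((EuclideanSpace.single j (2 * Real.pi) : EuclideanSpace ℝ (Fin n)),
      (0 : EuclideanSpace ℝ (Fin n))) G) ∧
  (∀ j, Per (((0 : EuclideanSpace ℝ (Fin n)),
      (EuclideanSpace.single j (2 * Real.pi) : EuclideanSpace ℝ (Fin n)))) G)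

/-- symbols given by an oscillatory integral with smooth doubly-periodic amplitude -/
def Sym (f : EuclideanSpace ℝ (Fin n) → (Fin n → ℤ) → ℂ) : Prop :=
  ∃ G : EuclideanSpace ℝ (Fin n) × EuclideanSpace ℝ (Fin n) → ℂ,
    ContDiff ℝ (⊤ : ℕ∞) G ∧ PerB G ∧
    ∀ x κ, f x κ = ∫ z in box n, eκ κ z * G (x, z)

lemma PerB.tdiff {F : Type*} [NormedAddCommGroup F] [NormedSpace ℝ F]
    {G : EuclideanSpace ℝ (Fin n) × EuclideanSpace ℝ (Fin n) → F}
    (h : PerB G) (c) : PerB (Tdiff c G) :=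
  ⟨fun j => per_tdiff (h.1 j), fun j => per_tdiff (h.2 j)⟩

lemma PerB.dDir {F : Type*} [NormedAddCommGroup F] [NormedSpace ℝ F]
    {G : EuclideanSpace ℝ (Fin n) × EuclideanSpace ℝ (Fin n) → F}
    (h : PerB G) (hG : ContDiff ℝ (⊤ : ℕ∞) G) (u) : PerB (dDir u G) :=
  ⟨fun j => per_dDir (hG.differentiable (by simp)) (h.1 j) u,
   fun j => per_dDir (hG.differentiable (by simp)) (h.2 j) u⟩

lemma PerB.bounded {F : Type*} [NormedAddCommGroup F]
    {G : EuclideanSpace ℝ (Fin n) × EuclideanSpace ℝ (Fin n) → F}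
    (h : PerB G) (hG : Continuous G) : ∃ M : ℝ, 0 ≤ M ∧ ∀ p, ‖G p‖ ≤ M := by
  apply bounded_of_reduction (isCompact_box.prod isCompact_box) hG
  rintro ⟨x, z⟩
  have hx : ∀ z : EuclideanSpace ℝ (Fin n), ∃ q ∈ box n, G (x, z) = G (q, z) := by
    intro z
    exact reduction_box (f := fun y => G (y, z))
      (fun j p => by
        have := h.1 j (p, z)
        simpa using this) x
  obtain ⟨q, hq, he⟩ := hx z
  have hz : ∃ r ∈ box n, G (q, z) = G (q, r) :=
    reduction_box (f := fun w => G (q, w))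
      (fun j p => by
        have := h.2 j (q, p)
        simpa using this) z
  obtain ⟨r, hr, he2⟩ := hz
  exact ⟨(q, r), Set.mk_mem_prod hq hr, he.trans he2⟩

/-- the elementary integrability fact -/
lemma integrableOn_box {f : EuclideanSpace ℝ (Fin n) → ℂ} (hf : Continuous f) :
    IntegrableOn f (box n) volume :=
  hf.continuousOn.integrableOn_compact isCompact_box

/-! ### The key decay estimate -/

lemma iter_dDir_props {G : EuclideanSpace ℝ (Fin n) × EuclideanSpace ℝ (Fin n) → ℂ}
    (hG : ContDiff ℝ (⊤ : ℕ∞) G) (hper : PerB G) (u) (m : ℕ) :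
    ContDiff ℝ (⊤ : ℕ∞) ((dDir u)^[m] G) ∧ PerB ((dDir u)^[m] G) := by
  induction m with
  | zero => exact ⟨hG, hper⟩
  | succ m ih =>
      rw [Function.iterate_succ_apply']
      exact ⟨contDiff_dDir ih.1 u, ih.2.dDir ih.1 u⟩

lemma prod_add_snd (x z h : EuclideanSpace ℝ (Fin n)) :
    ((x, z) : EuclideanSpace ℝ (Fin n) × EuclideanSpace ℝ (Fin n))
      + ((0 : EuclideanSpace ℝ (Fin n)), h) = (x, z + h) := by
  rw [Prod.mk_add_mk, add_zero]

lemma osc_neg {G : EuclideanSpace ℝ (Fin n) × EuclideanSpace ℝ (Fin n) → ℂ}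
    (hGc : Continuous G) (hper : PerB G) (x : EuclideanSpace ℝ (Fin n)) (κ : Fin n → ℤ)
    {h : EuclideanSpace ℝ (Fin n)}
    (hπ : Complex.exp (Complex.I * (idot h κ : ℝ)) = -1) :
    ∫ z in box n, eκ κ z * G (x, z + h) = - ∫ z in box n, eκ κ z * G (x, z) := by
  set H : EuclideanSpace ℝ (Fin n) → ℂ := fun z => eκ κ z * G (x, z) with hH
  have hper' : ∀ j, Per (EuclideanSpace.single j (2 * Real.pi)) H := by
    intro j z
    show eκ κ (z + _) * G (x, z + _) = eκ κ z * G (x, z)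
    rw [eκ_per]
    congr 1
    have h2 := hper.2 j (x, z)
    rwa [prod_add_snd] at h2
  have key := integral_box_add_right H hper' h
  have hL : ∀ z, H (z + h) = -(eκ κ z * G (x, z + h)) := by
    intro z
    show eκ κ (z + h) * G (x, z + h) = _
    rw [eκ_add, hπ]
    ring
  have key2 : ∫ z in box n, (-(eκ κ z * G (x, z + h))) = ∫ z in box n, H z := by
    rw [← key]
    exact setIntegral_congr_fun measurableSet_box fun z _ => (hL z).symm
  rw [integral_neg] at key2
  have := neg_eq_iff_eq_neg.mp key2
  exact this

lemma osc_step {G : EuclideanSpace ℝ (Fin n) × EuclideanSpace ℝ (Fin n) → ℂ}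
    (hG : ContDiff ℝ (⊤ : ℕ∞) G) (hper : PerB G) (x : EuclideanSpace ℝ (Fin n)) (κ : Fin n → ℤ)
    {h : EuclideanSpace ℝ (Fin n)}
    (hπ : Complex.exp (Complex.I * (idot h κ : ℝ)) = -1) :
    ∫ z in box n, eκ κ z * (Tdiff ((0 : EuclideanSpace ℝ (Fin n)), h) G) (x, z)
      = 2 * ∫ z in box n, eκ κ z * G (x, z) := by
  have hGc : Continuous G := hG.continuous
  have hsplit : ∀ z, eκ κ z * (Tdiff ((0 : EuclideanSpace ℝ (Fin n)), h) G) (x, z)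
      = eκ κ z * G (x, z) - eκ κ z * G (x, z + h) := by
    intro z
    show eκ κ z * (G (x, z) - G ((x, z) + _)) = _
    rw [prod_add_snd]
    ring
  have hint1 : IntegrableOn (fun z => eκ κ z * G (x, z)) (box n) volume :=
    integrableOn_box ((eκ_continuous κ).mul (hGc.comp (Continuous.prodMk_right x)))
  have hint2 : IntegrableOn (fun z => eκ κ z * G (x, z + h)) (box n) volume := by
    apply integrableOn_box
    apply (eκ_continuous κ).mul
    exact hGc.comp ((Continuous.prodMk_right x).comp (continuous_id.add continuous_const))
  calc ∫ z in box n, eκ κ z * (Tdiff ((0 : EuclideanSpace ℝ (Fin n)), h) G) (x, z)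
      = ∫ z in box n, (eκ κ z * G (x, z) - eκ κ z * G (x, z + h)) :=
        setIntegral_congr_fun measurableSet_box fun z _ => hsplit z
    _ = (∫ z in box n, eκ κ z * G (x, z)) - ∫ z in box n, eκ κ z * G (x, z + h) :=
        integral_sub hint1 hint2
    _ = (∫ z in box n, eκ κ z * G (x, z)) - (- ∫ z in box n, eκ κ z * G (x, z)) := by
        rw [osc_neg hGc hper x κ hπ]
    _ = 2 * ∫ z in box n, eκ κ z * G (x, z) := by ring

lemma osc_iter (x : EuclideanSpace ℝ (Fin n)) (κ : Fin n → ℤ)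
    {h : EuclideanSpace ℝ (Fin n)}
    (hπ : Complex.exp (Complex.I * (idot h κ : ℝ)) = -1) (m : ℕ) :
    ∀ (G : EuclideanSpace ℝ (Fin n) × EuclideanSpace ℝ (Fin n) → ℂ),
      ContDiff ℝ (⊤ : ℕ∞) G → PerB G →
      ∫ z in box n, eκ κ z * ((Tdiff ((0 : EuclideanSpace ℝ (Fin n)), h))^[m] G) (x, z)
        = 2 ^ m * ∫ z in box n, eκ κ z * G (x, z) := by
  induction m with
  | zero => intro G _ _; simp
  | succ m ih =>
      intro G hG hper
      rw [Function.iterate_succ_apply]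
      rw [ih _ (contDiff_tdiff hG _) (hper.tdiff _)]
      rw [osc_step hG hper x κ hπ]
      ring

set_option maxHeartbeats 1000000 in
lemma decay {G : EuclideanSpace ℝ (Fin n) × EuclideanSpace ℝ (Fin n) → ℂ}
    (hG : ContDiff ℝ (⊤ : ℕ∞) G) (hper : PerB G) (N : ℕ) :
    ∃ C > (0:ℝ), ∀ (x : EuclideanSpace ℝ (Fin n)) (κ : Fin n → ℤ),
      ‖∫ z in box n, eκ κ z * G (x, z)‖ ≤
        C * Real.sqrt (1 + ∑ j, ((κ j : ℝ))^2) ^ (-(N : ℝ)) := by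
  classical
  set u : Fin n → EuclideanSpace ℝ (Fin n) × EuclideanSpace ℝ (Fin n) :=
    fun j => ((0 : EuclideanSpace ℝ (Fin n)), EuclideanSpace.single j (1:ℝ)) with hu
  have hMj : ∀ j : Fin n, ∃ M : ℝ, 0 ≤ M ∧ ∀ p, ‖(dDir (u j))^[N] G p‖ ≤ M := by
    intro j
    obtain ⟨hc, hp⟩ := iter_dDir_props hG hper (u j) N
    exact hp.bounded hc.continuous
  choose Mf hMf0 hMf using hMj
  obtain ⟨M0, hM00, hM0⟩ := hper.bounded hG.continuous
  set V : ℝ := (volume (box n)).toReal with hV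
  have hV0 : 0 ≤ V := ENNReal.toReal_nonneg
  set S : ℝ := (∑ j, Mf j) + M0 with hS
  have hS0 : 0 ≤ S := add_nonneg (Finset.sum_nonneg fun j _ => hMf0 j) hM00
  have hMfS : ∀ j, Mf j ≤ S := fun j =>
    le_add_of_le_of_nonneg (Finset.single_le_sum (fun i _ => hMf0 i) (Finset.mem_univ j)) hM00
  have hM0S : M0 ≤ S := le_add_of_nonneg_left (Finset.sum_nonneg fun j _ => hMf0 j)
  set B : ℝ := (Real.pi * Real.sqrt (n+1)) ^ N with hB
  have hB0 : 0 ≤ B := pow_nonneg (mul_nonneg Real.pi_pos.le (Real.sqrt_nonneg _)) N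
  refine ⟨(V + 1) * (B * S + S + 1), by positivity, fun x κ => ?_⟩
  set Q : ℝ := Real.sqrt (1 + ∑ j, ((κ j : ℝ))^2) with hQ
  have hsum0 : (0:ℝ) ≤ ∑ j, ((κ j : ℝ))^2 := Finset.sum_nonneg fun j _ => sq_nonneg _
  have hQ1 : 1 ≤ Q := by
    rw [hQ, show (1:ℝ) = Real.sqrt 1 from (Real.sqrt_one).symm]
    exact Real.sqrt_le_sqrt (by simpa using hsum0)
  have hQ0 : 0 < Q := lt_of_lt_of_le one_pos hQ1
  have hrpow : Q ^ (-(N : ℝ)) = (Q ^ N)⁻¹ := by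
    rw [Real.rpow_neg hQ0.le, Real.rpow_natCast]
  rw [hrpow, ← div_eq_mul_inv, le_div_iff₀ (pow_pos hQ0 N)]
  -- main estimate : ‖J‖ * Q^N ≤ C
  by_cases hκ : ∀ j, κ j = 0
  · -- trivial case
    have hQeq : Q = 1 := by
      rw [hQ]
      have : (∑ j, ((κ j : ℝ))^2) = 0 := by
        apply Finset.sum_eq_zero
        intro j _
        rw [hκ j]; norm_num
      rw [this, add_zero, Real.sqrt_one]
    have hJ : ‖∫ z in box n, eκ κ z * G (x, z)‖ ≤ M0 * V := by
      have := norm_setIntegral_le_of_norm_le_const volume_box_lt_top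
        (f := fun z => eκ κ z * G (x, z))
        (C := M0) (fun z _ => by rw [norm_mul, eκ_norm, one_mul]; exact hM0 (x, z))
      exact this
    rw [hQeq, one_pow, mul_one]
    have h1 : M0 * V ≤ S * (V + 1) := by
      exact _root_.mul_le_mul hM0S (by linarith) hV0 hS0
    nlinarith [hS0, hB0, hV0, mul_nonneg hB0 hS0, mul_nonneg (mul_nonneg hB0 hS0) hV0]
  · push_neg at hκ
    obtain ⟨j0, hj0⟩ := hκ
    obtain ⟨jm, _, hjm⟩ := Finset.exists_max_image Finset.univ (fun j => |κ j|)
      ⟨j0, Finset.mem_univ j0⟩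
    have hjmmax : ∀ j, |κ j| ≤ |κ jm| := fun j => hjm j (Finset.mem_univ j)
    have hjmne : κ jm ≠ 0 := by
      intro hzero
      have h1 := hjmmax j0
      rw [hzero, abs_zero] at h1
      exact hj0 (abs_eq_zero.mp (le_antisymm h1 (abs_nonneg _)))
    have hjmabs : (1:ℝ) ≤ |(κ jm : ℝ)| := by
      rw [← Int.cast_abs]
      exact_mod_cast Int.one_le_abs hjmne
    have hjmR : ((κ jm : ℝ)) ≠ 0 := Int.cast_ne_zero.mpr hjmne
    have hjmabs0 : (0:ℝ) < |(κ jm : ℝ)| := lt_of_lt_of_le one_pos hjmabs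
    set t : ℝ := Real.pi / (κ jm : ℝ) with hT
    set h : EuclideanSpace ℝ (Fin n) := EuclideanSpace.single jm t with hh
    have hπ : Complex.exp (Complex.I * (idot h κ : ℝ)) = -1 := by
      rw [hh, idot_single]
      have : t * (κ jm : ℝ) = Real.pi := by
        rw [hT]; field_simp
      rw [this, mul_comm, Complex.exp_pi_mul_I]
    -- norm bound on the iterated difference
    have hTb : ∀ z ∈ box n,
        ‖eκ κ z * ((Tdiff ((0 : EuclideanSpace ℝ (Fin n)), h))^[N] G) (x, z)‖
          ≤ |t| ^ N * Mf jm := by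
      intro z _
      rw [norm_mul, eκ_norm, one_mul]
      have hc : ((0 : EuclideanSpace ℝ (Fin n)), h) = t • u jm := by
        rw [hu, Prod.smul_mk, smul_zero, hh, single_smul']
      rw [hc]
      exact tdiff_iter_bound N G hG (u jm) t (Mf jm) (hMf jm) (x, z)
    have hiter := osc_iter x κ hπ N G hG hper
    have hJbound : (2:ℝ) ^ N * ‖∫ z in box n, eκ κ z * G (x, z)‖ ≤ (|t| ^ N * Mf jm) * V := by
      have h1 : ‖∫ z in box n, eκ κ z *
          ((Tdiff ((0 : EuclideanSpace ℝ (Fin n)), h))^[N] G) (x, z)‖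
            ≤ (|t| ^ N * Mf jm) * V := by
        have hcont : Continuous fun z : EuclideanSpace ℝ (Fin n) =>
            eκ κ z * ((Tdiff ((0 : EuclideanSpace ℝ (Fin n)), h))^[N] G) (x, z) := by
          apply (eκ_continuous κ).mul
          exact (contDiff_tdiff_iter hG _ N).continuous.comp (Continuous.prodMk_right x)
        exact norm_setIntegral_le_of_norm_le_const volume_box_lt_top hTb
      rw [hiter] at h1
      rw [norm_mul] at h1
      have h2 : ‖(2:ℂ) ^ N‖ = (2:ℝ) ^ N := by
        rw [norm_pow]
        norm_num
      rwa [h2] at h1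
    have hJ : ‖∫ z in box n, eκ κ z * G (x, z)‖ ≤ |t| ^ N * Mf jm * V := by
      have h2N : (1:ℝ) ≤ 2 ^ N := one_le_pow₀ (by norm_num)
      have hnn : 0 ≤ ‖∫ z in box n, eκ κ z * G (x, z)‖ := norm_nonneg _
      nlinarith
    -- the size of Q
    have hQle : Q ≤ Real.sqrt (n+1) * |(κ jm : ℝ)| := by
      have hsb : ∑ j, ((κ j : ℝ))^2 ≤ (n:ℝ) * ((κ jm : ℝ))^2 := by
        have : ∀ j ∈ Finset.univ, ((κ j : ℝ))^2 ≤ ((κ jm : ℝ))^2 := by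
          intro j _
          have h1 : |(κ j : ℝ)| ≤ |(κ jm : ℝ)| := by
            rw [← Int.cast_abs, ← Int.cast_abs]
            exact_mod_cast hjmmax j
          calc ((κ j : ℝ))^2 = |(κ j : ℝ)|^2 := (sq_abs _).symm
            _ ≤ |(κ jm : ℝ)|^2 := pow_le_pow_left₀ (abs_nonneg _) h1 2
            _ = ((κ jm : ℝ))^2 := sq_abs _
        calc ∑ j, ((κ j : ℝ))^2 ≤ ∑ _j : Fin n, ((κ jm : ℝ))^2 :=
              Finset.sum_le_sum this
          _ = (n:ℝ) * ((κ jm : ℝ))^2 := by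
              rw [Finset.sum_const, Finset.card_univ, Fintype.card_fin, nsmul_eq_mul]
      have h1sq : (1:ℝ) ≤ ((κ jm : ℝ))^2 := by
        calc (1:ℝ) = 1^2 := by norm_num
          _ ≤ |(κ jm : ℝ)|^2 := pow_le_pow_left₀ (by norm_num) hjmabs 2
          _ = ((κ jm : ℝ))^2 := sq_abs _
      have harg : 1 + ∑ j, ((κ j : ℝ))^2 ≤ ((n:ℝ)+1) * ((κ jm : ℝ))^2 := by nlinarith
      calc Q ≤ Real.sqrt (((n:ℝ)+1) * ((κ jm : ℝ))^2) := Real.sqrt_le_sqrt harg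
        _ = Real.sqrt ((n:ℝ)+1) * |(κ jm : ℝ)| := by
            rw [Real.sqrt_mul (by positivity), Real.sqrt_sq_eq_abs]
        _ = Real.sqrt (n+1) * |(κ jm : ℝ)| := by norm_num
    have htabs : |t| = Real.pi / |(κ jm : ℝ)| := by
      rw [hT, abs_div, abs_of_pos Real.pi_pos]
    -- combine
    have hQN : Q ^ N ≤ (Real.sqrt (n+1))^N * |(κ jm : ℝ)|^N := by
      calc Q ^ N ≤ (Real.sqrt (n+1) * |(κ jm : ℝ)|)^N := pow_le_pow_left₀ hQ0.le hQle N
        _ = (Real.sqrt (n+1))^N * |(κ jm : ℝ)|^N := mul_pow _ _ _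
    have hfinal : ‖∫ z in box n, eκ κ z * G (x, z)‖ * Q ^ N ≤ B * (Mf jm) * V := by
      have h1 : ‖∫ z in box n, eκ κ z * G (x, z)‖ * Q ^ N
          ≤ (|t| ^ N * Mf jm * V) * ((Real.sqrt (n+1))^N * |(κ jm : ℝ)|^N) := by
        exact _root_.mul_le_mul hJ hQN (pow_nonneg hQ0.le N)
          (mul_nonneg (mul_nonneg (pow_nonneg (abs_nonneg _) N) (hMf0 jm)) hV0)
      have h2 : (|t| ^ N * Mf jm * V) * ((Real.sqrt (n+1))^N * |(κ jm : ℝ)|^N)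
          = B * (Mf jm) * V := by
        have hane : |(κ jm : ℝ)|^N ≠ 0 := pow_ne_zero _ (ne_of_gt hjmabs0)
        rw [htabs, hB, div_pow, mul_pow]
        field_simp
      rw [h2] at h1
      exact h1
    have hlast : B * (Mf jm) * V ≤ (V + 1) * (B * S + S + 1) := by
      have h3 : B * Mf jm ≤ B * S := mul_le_mul_of_nonneg_left (hMfS jm) hB0
      nlinarith [mul_nonneg hB0 hS0]
    exact le_trans hfinal hlast

/-! ### Closure properties of the symbol class -/

lemma idot_add_right (z : EuclideanSpace ℝ (Fin n)) (κ μ : Fin n → ℤ) :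
    idot z (κ + μ) = idot z κ + idot z μ := by
  unfold idot
  rw [← Finset.sum_add_distrib]
  refine Finset.sum_congr rfl fun j _ => ?_
  rw [Pi.add_apply]
  push_cast
  ring

lemma idot_pi_single (z : EuclideanSpace ℝ (Fin n)) (j : Fin n) :
    idot z (Pi.single j 1) = z j := by
  unfold idot
  rw [Finset.sum_eq_single j]
  · simp
  · intro i _ hij; simp [Pi.single_apply, hij]
  · simp

lemma eκ_succ (κ : Fin n → ℤ) (j : Fin n) (z : EuclideanSpace ℝ (Fin n)) :
    eκ (κ + Pi.single j 1) z = eκ κ z * Complex.exp (Complex.I * (z j : ℝ)) := by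
  unfold eκ
  rw [idot_add_right, idot_pi_single]
  push_cast
  rw [mul_add, Complex.exp_add]

lemma Sym.dK {f} (hf : Sym (n := n) f) (j : Fin n) : Sym (dK j f) := by
  obtain ⟨G, hG, hper, hfe⟩ := hf
  refine ⟨fun p => (Complex.exp (Complex.I * (p.2 j : ℝ)) - 1) * G p, ?_, ?_, ?_⟩
  · apply ContDiff.mul _ hG
    apply ContDiff.sub _ contDiff_const
    apply ContDiff.cexp
    have h1 : ContDiff ℝ (⊤ : ℕ∞)
        (fun p : EuclideanSpace ℝ (Fin n) × EuclideanSpace ℝ (Fin n) => p.2 j) :=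
      ((EuclideanSpace.proj (𝕜 := ℝ) j).contDiff).comp contDiff_snd
    have h2 : ContDiff ℝ (⊤ : ℕ∞)
        (fun p : EuclideanSpace ℝ (Fin n) × EuclideanSpace ℝ (Fin n) => ((p.2 j : ℝ) : ℂ)) :=
      Complex.ofRealCLM.contDiff.comp h1
    exact contDiff_const.mul h2
  · constructor
    · intro j' p
      have h1 := hper.1 j' p
      show (Complex.exp (Complex.I * ((p.2 + (0:EuclideanSpace ℝ (Fin n))) j : ℝ)) - 1) * _ = _
      rw [add_zero, h1]
    · intro j' p
      have h1 := hper.2 j' p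
      dsimp only
      rw [h1]
      congr 2
      show Complex.exp (Complex.I *
        (((p.2 + EuclideanSpace.single j' (2*Real.pi)) j : ℝ) : ℂ)) = _
      have hco : (p.2 + EuclideanSpace.single j' (2*Real.pi)) j
          = p.2 j + if j = j' then 2*Real.pi else 0 := by
        show p.2 j + EuclideanSpace.single j' (2*Real.pi) j = _
        rw [EuclideanSpace.single_apply]
      rw [hco]
      by_cases hjj : j = j'
      · rw [if_pos hjj]
        push_cast
        rw [mul_add, Complex.exp_add]
        have h2 : Complex.I * (2 * (Real.pi:ℂ)) = 2 * (Real.pi:ℂ) * Complex.I := by ring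
        rw [h2, Complex.exp_two_pi_mul_I, mul_one]
      · rw [if_neg hjj, add_zero]
  · intro x κ
    show f x (κ + Pi.single j 1) - f x κ = _
    rw [hfe x (κ + Pi.single j 1), hfe x κ]
    have hint1 : IntegrableOn (fun z => eκ (κ + Pi.single j 1) z * G (x, z)) (box n) volume :=
      integrableOn_box ((eκ_continuous _).mul (hG.continuous.comp (Continuous.prodMk_right x)))
    have hint2 : IntegrableOn (fun z => eκ κ z * G (x, z)) (box n) volume :=
      integrableOn_box ((eκ_continuous _).mul (hG.continuous.comp (Continuous.prodMk_right x)))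
    rw [← integral_sub hint1 hint2]
    refine setIntegral_congr_fun measurableSet_box fun z _ => ?_
    rw [eκ_succ]
    ring

lemma norm_inl_le_one :
    ‖(ContinuousLinearMap.inl ℝ (EuclideanSpace ℝ (Fin n)) (EuclideanSpace ℝ (Fin n)))‖ ≤ 1 := by
  apply ContinuousLinearMap.opNorm_le_bound _ zero_le_one
  intro v
  rw [one_mul, ContinuousLinearMap.inl_apply]
  show max ‖v‖ ‖(0 : EuclideanSpace ℝ (Fin n))‖ ≤ ‖v‖
  simp

lemma Sym.pXtor {f} (hf : Sym (n := n) f) (j : Fin n) : Sym (pXtor j f) := by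
  obtain ⟨G, hG, hper, hfe⟩ := hf
  have hdiff : Differentiable ℝ G := hG.differentiable (by simp)
  set u : EuclideanSpace ℝ (Fin n) × EuclideanSpace ℝ (Fin n) :=
    ((EuclideanSpace.single j (1:ℝ) : EuclideanSpace ℝ (Fin n)),
      (0 : EuclideanSpace ℝ (Fin n))) with hu
  refine ⟨dDir u G, contDiff_dDir hG u, hper.dDir hG u, ?_⟩
  intro x κ
  have hfc : Continuous (fun p => fderiv ℝ G p) := (hG.fderiv_right (m := (⊤ : ℕ∞)) (by simp)).continuous
  have hfper : PerB (fun p => fderiv ℝ G p) :=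
    ⟨fun j' => per_fderiv hdiff (hper.1 j'), fun j' => per_fderiv hdiff (hper.2 j')⟩
  obtain ⟨MD, hMD0, hMD⟩ := hfper.bounded hfc
  set F' : EuclideanSpace ℝ (Fin n) → EuclideanSpace ℝ (Fin n) →
      (EuclideanSpace ℝ (Fin n) →L[ℝ] ℂ) := fun x' z =>
    eκ κ z • ((fderiv ℝ G (x', z)).comp
      (ContinuousLinearMap.inl ℝ (EuclideanSpace ℝ (Fin n)) (EuclideanSpace ℝ (Fin n)))) with hF'
  have hF'cont : ∀ x', Continuous (F' x') := by
    intro x'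
    apply (eκ_continuous κ).smul
    exact (hfc.comp (Continuous.prodMk_right x')).clm_comp continuous_const
  have hcy : ∀ y, Continuous (fun z => eκ κ z * G (y, z)) := fun y =>
    (eκ_continuous κ).mul (hG.continuous.comp (Continuous.prodMk_right y))
  have h1 : ∀ᶠ y in nhds x, AEStronglyMeasurable (fun z => eκ κ z * G (y, z))
      (volume.restrict (box n)) :=
    Filter.Eventually.of_forall fun y => ((hcy y).aestronglyMeasurable).restrict
  have h2 : Integrable (fun z => eκ κ z * G (x, z)) (volume.restrict (box n)) :=
    integrableOn_box ((eκ_continuous κ).mul (hG.continuous.comp (Continuous.prodMk_right x)))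
  have h3 : AEStronglyMeasurable (F' x) (volume.restrict (box n)) :=
    (hF'cont x).aestronglyMeasurable.restrict
  have h4 : ∀ᵐ z ∂(volume.restrict (box n)), ∀ y ∈ Metric.ball x 1, ‖F' y z‖ ≤ MD := by
    apply Filter.Eventually.of_forall
    intro z y _
    rw [hF']
    dsimp only
    apply ContinuousLinearMap.opNorm_le_bound _ hMD0
    intro v
    rw [ContinuousLinearMap.smul_apply, ContinuousLinearMap.comp_apply,
      ContinuousLinearMap.inl_apply, smul_eq_mul, norm_mul, eκ_norm, one_mul]
    have hv0 : ‖((v, (0 : EuclideanSpace ℝ (Fin n))) :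
        EuclideanSpace ℝ (Fin n) × EuclideanSpace ℝ (Fin n))‖ ≤ ‖v‖ := by
      show max ‖v‖ ‖(0 : EuclideanSpace ℝ (Fin n))‖ ≤ ‖v‖
      simp
    calc ‖fderiv ℝ G (y, z) (v, 0)‖
        ≤ ‖fderiv ℝ G (y, z)‖ * ‖((v, (0 : EuclideanSpace ℝ (Fin n))) :
            EuclideanSpace ℝ (Fin n) × EuclideanSpace ℝ (Fin n))‖ :=
          ContinuousLinearMap.le_opNorm _ _
      _ ≤ MD * ‖v‖ := _root_.mul_le_mul (hMD (y, z)) hv0 (norm_nonneg _) hMD0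
  have h5 : Integrable (fun _ : EuclideanSpace ℝ (Fin n) => MD) (volume.restrict (box n)) := by
    rw [MeasureTheory.integrable_const_iff]
    right
    exact isFiniteMeasure_restrict.mpr volume_box_lt_top.ne
  have h6 : ∀ᵐ z ∂(volume.restrict (box n)), ∀ y ∈ Metric.ball x 1,
      HasFDerivAt (fun y' => eκ κ z * G (y', z)) (F' y z) y := by
    apply Filter.Eventually.of_forall
    intro z y _
    have hp : HasFDerivAt (fun y' : EuclideanSpace ℝ (Fin n) => (y', z))
        (ContinuousLinearMap.inl ℝ (EuclideanSpace ℝ (Fin n)) (EuclideanSpace ℝ (Fin n))) y :=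
      hasFDerivAt_prodMk_left y z
    have hcmp : HasFDerivAt (fun y' : EuclideanSpace ℝ (Fin n) => G (y', z))
        ((fderiv ℝ G (y, z)).comp
          (ContinuousLinearMap.inl ℝ (EuclideanSpace ℝ (Fin n)) (EuclideanSpace ℝ (Fin n)))) y :=
      (hdiff (y, z)).hasFDerivAt.comp y hp
    exact hcmp.const_mul (eκ κ z)
  have hkey : HasFDerivAt (fun y => ∫ z in box n, eκ κ z * G (y, z))
      (∫ z in box n, F' x z) x :=
    hasFDerivAt_integral_of_dominated_of_fderiv_le (Metric.ball_mem_nhds x one_pos) h1 h2 h3 h4 h5 h6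
  have hfeq : (fun y => f y κ) = fun y => ∫ z in box n, eκ κ z * G (y, z) :=
    funext fun y => hfe y κ
  show fderiv ℝ (fun x' => f x' κ) x (EuclideanSpace.single j 1) = _
  rw [hfeq, hkey.fderiv]
  have hintF' : Integrable (F' x) (volume.restrict (box n)) :=
    (hF'cont x).continuousOn.integrableOn_compact isCompact_box
  rw [ContinuousLinearMap.integral_apply hintF']
  refine setIntegral_congr_fun measurableSet_box fun z _ => ?_
  rw [hF']
  dsimp only
  rw [ContinuousLinearMap.smul_apply, ContinuousLinearMap.comp_apply,
    ContinuousLinearMap.inl_apply, smul_eq_mul]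
  rfl

lemma Sym.wig {ψ : EuclideanSpace ℝ (Fin n) → ℂ} (hψ : ContDiff ℝ (⊤ : ℕ∞) ψ) (hψp : IsPeriodicC ψ) :
    Sym (wig ψ) := by
  have hψper : ∀ j, Per (EuclideanSpace.single j (2 * Real.pi)) ψ := fun j p => hψp p j
  refine ⟨fun p => (((2 * Real.pi)^n : ℝ) : ℂ)⁻¹ *
      (ψ (p.1 - p.2) * starRingEnd ℂ (ψ (p.1 + p.2))), ?_, ?_, ?_⟩
  · apply contDiff_const.mul
    apply ContDiff.mul
    · exact hψ.comp (contDiff_fst.sub contDiff_snd)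
    · have h1 : ContDiff ℝ (⊤ : ℕ∞)
          (fun p : EuclideanSpace ℝ (Fin n) × EuclideanSpace ℝ (Fin n) => ψ (p.1 + p.2)) :=
        hψ.comp (contDiff_fst.add contDiff_snd)
      exact Complex.conjCLE.contDiff.comp h1
  · constructor
    · intro j p
      dsimp only
      congr 2
      · show ψ (p.1 + EuclideanSpace.single j (2*Real.pi) - (p.2 + 0)) = _
        rw [add_zero, add_sub_right_comm]
        exact hψper j _
      · show starRingEnd ℂ (ψ (p.1 + EuclideanSpace.single j (2*Real.pi) + (p.2 + 0))) = _
        rw [add_zero, add_right_comm]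
        rw [hψper j _]
    · intro j p
      dsimp only
      congr 2
      · show ψ (p.1 + 0 - (p.2 + EuclideanSpace.single j (2*Real.pi))) = _
        rw [add_zero, sub_add_eq_sub_sub]
        exact (hψper j).sub' _
      · show starRingEnd ℂ (ψ (p.1 + 0 + (p.2 + EuclideanSpace.single j (2*Real.pi)))) = _
        rw [add_zero, ← add_assoc]
        rw [hψper j _]
  · intro x κ
    show (((2 * Real.pi)^n : ℝ) : ℂ)⁻¹ * ∫ z in box n,
        Complex.exp (Complex.I * (idot z κ : ℝ)) * (ψ (x - z) * starRingEnd ℂ (ψ (x + z))) = _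
    rw [← MeasureTheory.integral_const_mul]
    refine setIntegral_congr_fun measurableSet_box fun z _ => ?_
    show _ = eκ κ z * ((((2 * Real.pi)^n : ℝ) : ℂ)⁻¹ * (ψ (x - z) * starRingEnd ℂ (ψ (x + z))))
    unfold eκ
    ring

lemma Sym.multiOp {D : Fin n → (EuclideanSpace ℝ (Fin n) → (Fin n → ℤ) → ℂ) →
      (EuclideanSpace ℝ (Fin n) → (Fin n → ℤ) → ℂ)}
    (hD : ∀ j f, Sym f → Sym (D j f)) (α : Fin n → ℕ) {f} (hf : Sym f) :
    Sym (multiOp D α f) := by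
  have hiter : ∀ (j : Fin n) (m : ℕ) g, Sym g → Sym ((D j)^[m] g) := by
    intro j m
    induction m with
    | zero => intro g hg; exact hg
    | succ m ih =>
        intro g hg
        rw [Function.iterate_succ_apply]
        exact ih _ (hD j g hg)
  have : ∀ (l : List (Fin n)) g, Sym g →
      Sym (compAll (l.map fun j => (D j)^[α j]) g) := by
    intro l
    induction l with
    | nil => intro g hg; exact hg
    | cons a l ih =>
        intro g hg
        show Sym (compAll ((fun j => (D j)^[α j]) a :: l.map fun j => (D j)^[α j]) g)
        have : compAll ((fun j => (D j)^[α j]) a :: l.map fun j => (D j)^[α j]) g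
            = (D a)^[α a] (compAll (l.map fun j => (D j)^[α j]) g) := rfl
        rw [this]
        exact hiter a (α a) _ (ih g hg)
  exact this (List.finRange n) f hf

end WigAux

open WigAux in
theorem wigner_transform_is_smoothing_toroidal_symbol
    (n : ℕ) (ψ : EuclideanSpace ℝ (Fin n) → ℂ)
    (hψ : ContDiff ℝ (⊤ : ℕ∞) ψ) (hψp : IsPeriodicC ψ) :
    ∀ (N : ℕ) (α β : Fin n → ℕ), ∃ C > (0:ℝ),
      ∀ (x : EuclideanSpace ℝ (Fin n)) (κ : Fin n → ℤ),
        ‖multiOp pXtor α (multiOp dK β (wig ψ)) x κ‖ ≤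
          C * Real.sqrt (1 + ∑ j, ((κ j : ℝ))^2) ^ (-(N : ℝ)) := by
  intro N α β
  have hsym : Sym (multiOp pXtor α (multiOp dK β (wig ψ))) := by
    apply Sym.multiOp (fun j f hf => Sym.pXtor hf j) α
    exact Sym.multiOp (fun j f hf => Sym.dK hf j) β (Sym.wig hψ hψp)
  obtain ⟨G, hG, hper, hfe⟩ := hsym
  obtain ⟨C, hC, hb⟩ := decay hG hper N
  refine ⟨C, hC, fun x κ => ?_⟩
  rw [hfe x κ]
  exact hb x κ

end
end
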